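/- arXiv:1911.13187 — 4 statements merged into one kernel-verified Lean document; each statement's English description precedes it below -/
import Mathlib

section
/- For the Q-voter model on [n] with opinions in {0,1} started from the product measure μ_u in which each voter independently has opinion 1 with probability u ∈ (0,1), the expected consensus time satisfies t^{(u)}_cons ≤ t_coal, where t_coal is the expected time for the dual system of coalescing Q-random walks started with one walker at every state to coalesce to a single walker within every irreducible component. If in addition the Markov chain with generator Q is irreducible, then t^{(u)}_cons ≥ 2u(1−u) t_coal for all u ∈ (0,1). -/
open scoped BigOperators Classical
open MeasureTheory Filter

noncomputable section

namespace VoterIRG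

/-! ### Continuous-time Markov chains via their generators -/

/-- `Q` is the generator (`Q`-matrix) of a continuous-time Markov chain on `Fin n`:
nonnegative off-diagonal entries and zero row sums. -/
def IsGenerator {n : ℕ} (Q : Matrix (Fin n) (Fin n) ℝ) : Prop :=
  (∀ i j, i ≠ j → 0 ≤ Q i j) ∧ ∀ i, ∑ j, Q i j = 0

/-- Detailed balance of `Q` with respect to `pi`. -/
def Reversible {n : ℕ} (Q : Matrix (Fin n) (Fin n) ℝ) (pi : Fin n → ℝ) : Prop :=
  ∀ i j, pi i * Q i j = pi j * Q j i

/-- `pi` is a (positive) stationary distribution for the chain with generator `Q`. -/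
def IsStationaryDist {n : ℕ} (Q : Matrix (Fin n) (Fin n) ℝ) (pi : Fin n → ℝ) : Prop :=
  (∀ i, 0 < pi i) ∧ (∑ i, pi i = 1) ∧ ∀ j, ∑ i, pi i * Q i j = 0

/-- `i` and `j` lie in the same irreducible (communicating) component of the chain. -/
def SameComp {n : ℕ} (Q : Matrix (Fin n) (Fin n) ℝ) : Fin n → Fin n → Prop :=
  Relation.ReflTransGen fun a b => a ≠ b ∧ (Q a b ≠ 0 ∨ Q b a ≠ 0)

/-- The chain with generator `Q` is irreducible. -/
def Irreducible {n : ℕ} (Q : Matrix (Fin n) (Fin n) ℝ) : Prop :=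
  ∀ i j, SameComp Q i j

/-- `h` is the vector of expected hitting times of the set `A` for the chain with
generator `Q`, on the (transition-closed) part `D` of the state space: it is the
minimal nonnegative solution on `D` of `h = 0` on `A` and `(Q h)(s) = -1` off `A`. -/
def IsHittingOn {S : Type*} [Fintype S] (Q : Matrix S S ℝ) (D A : Set S) (h : S → ℝ) : Prop :=
  (∀ s ∈ D, 0 ≤ h s) ∧ (∀ s ∈ D ∩ A, h s = 0) ∧
  (∀ s ∈ D, s ∉ A → ∑ t, Q s t * h t = -1) ∧
  ∀ g : S → ℝ, (∀ s ∈ D, 0 ≤ g s) → (∀ s ∈ D ∩ A, g s = 0) →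
    (∀ s ∈ D, s ∉ A → ∑ t, Q s t * g t = -1) → (∀ s ∉ D, g s = h s) →
    ∀ s ∈ D, h s ≤ g s

/-- `h` is the vector of expected hitting times of `A` (whole state space version). -/
def IsHitting {S : Type*} [Fintype S] (Q : Matrix S S ℝ) (A : Set S) (h : S → ℝ) : Prop :=
  IsHittingOn Q Set.univ A h

/-- `h x y = 𝔼ₓ(T_y)`, the expected hitting time of `y` from `x` (defined on the
component of `y`). -/
def IsHitTimeFn {n : ℕ} (Q : Matrix (Fin n) (Fin n) ℝ) (h : Fin n → Fin n → ℝ) : Prop :=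
  ∀ y, IsHittingOn Q {x | SameComp Q x y} {y} fun x => h x y

/-- Generator of two independent copies of the chain (the product chain). -/
def prodGen {n : ℕ} (Q : Matrix (Fin n) (Fin n) ℝ) :
    Matrix (Fin n × Fin n) (Fin n × Fin n) ℝ := fun p q =>
  (if p.2 = q.2 then Q p.1 q.1 else 0) + (if p.1 = q.1 then Q p.2 q.2 else 0)

/-- `m (x, y) = 𝔼_{x,y}(τ_meet)`, the expected meeting time of two independent copies
of the chain started at `x` and `y` (defined for `x, y` in the same component). -/
def IsMeetTimeFn {n : ℕ} (Q : Matrix (Fin n) (Fin n) ℝ) (m : Fin n × Fin n → ℝ) : Prop :=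
  IsHittingOn (prodGen Q) {p | SameComp Q p.1 p.2} {p | p.1 = p.2} m

/-! ### The voter model and the coalescing system -/

/-- Generator of the `Q`-voter model on opinion configurations `Fin n → Bool`:
for `i ≠ j`, at rate `Q i j` the opinion at `i` is replaced by the opinion at `j`. -/
def voterGen {n : ℕ} (Q : Matrix (Fin n) (Fin n) ℝ) :
    Matrix (Fin n → Bool) (Fin n → Bool) ℝ := fun η ξ =>
  if η = ξ then
    -∑ i, ∑ j, (if i ≠ j ∧ Function.update η i (η j) ≠ η then Q i j else 0)
  else
    ∑ i, ∑ j, (if i ≠ j ∧ Function.update η i (η j) = ξ then Q i j else 0)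

/-- Configurations which are constant on every irreducible component. -/
def ConsensusSet {n : ℕ} (Q : Matrix (Fin n) (Fin n) ℝ) : Set (Fin n → Bool) :=
  {η | ∀ i j, SameComp Q i j → η i = η j}

/-- The product Bernoulli(u) weight of a configuration `η`. -/
def bernWeight {n : ℕ} (u : ℝ) (η : Fin n → Bool) : ℝ :=
  ∏ i, if η i then u else 1 - u

/-- `T = 𝔼_{μ_u}(τ_cons)`: the expected consensus time of the `Q`-voter model started
from i.i.d. Bernoulli(u) opinions, expressed through the expected-hitting-time vector
of the consensus configurations. -/
def IsExpConsensusTime {n : ℕ} (Q : Matrix (Fin n) (Fin n) ℝ) (u T : ℝ) : Prop :=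
  ∃ h : (Fin n → Bool) → ℝ,
    IsHitting (voterGen Q) (ConsensusSet Q) h ∧ T = ∑ η, bernWeight u η * h η

/-- Generator of the system of coalescing `Q`-random walks, recorded through the set of
occupied sites: the walker at `x` jumps to `y` at rate `Q x y`, and walkers coalesce
upon meeting. -/
def coalGen {n : ℕ} (Q : Matrix (Fin n) (Fin n) ℝ) :
    Matrix (Finset (Fin n)) (Finset (Fin n)) ℝ := fun S T =>
  if S = T then
    -∑ x ∈ S, ∑ y, (if x ≠ y ∧ insert y (S.erase x) ≠ S then Q x y else 0)
  else
    ∑ x ∈ S, ∑ y, (if x ≠ y ∧ insert y (S.erase x) = T then Q x y else 0)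

/-- Occupied-site sets in which all walkers within any single irreducible component
have coalesced into one walker. -/
def CoalescedSet {n : ℕ} (Q : Matrix (Fin n) (Fin n) ℝ) : Set (Finset (Fin n)) :=
  {S | ∀ x ∈ S, ∀ y ∈ S, SameComp Q x y → x = y}

/-- `T = t_coal = 𝔼_{[n]}(max_j τ_coal(C_j))`: the expected time for the coalescing
system started with one walker at every state to coalesce completely within every
irreducible component. -/
def IsExpCoalTime {n : ℕ} (Q : Matrix (Fin n) (Fin n) ℝ) (T : ℝ) : Prop :=
  ∃ g : Finset (Fin n) → ℝ,
    IsHitting (coalGen Q) (CoalescedSet Q) g ∧ T = g Finset.univ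

/-! ### Transition semigroup, mixing and relaxation times -/

/-- The transition semigroup `P_t = e^{tQ}` of the chain. -/
def transSemigroup {n : ℕ} (Q : Matrix (Fin n) (Fin n) ℝ) (t : ℝ) :
    Matrix (Fin n) (Fin n) ℝ :=
  NormedSpace.exp (t • Q)

/-- Worst-case total variation distance from stationarity at time `t`. -/
def tvDist {n : ℕ} (Q : Matrix (Fin n) (Fin n) ℝ) (pi : Fin n → ℝ) (t : ℝ) : ℝ :=
  (1 / 2) * ⨆ x : Fin n, ∑ j, |transSemigroup Q t x j - pi j|

/-- The mixing time `t_mix = min{t ≥ 0 : d(t) ≤ 1/4}`. -/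
def mixingTime {n : ℕ} (Q : Matrix (Fin n) (Fin n) ℝ) (pi : Fin n → ℝ) : ℝ :=
  sInf {t : ℝ | 0 ≤ t ∧ tvDist Q pi t ≤ 1 / 4}

/-- The mixing time from the state `i`. -/
def mixingTimeFrom {n : ℕ} (Q : Matrix (Fin n) (Fin n) ℝ) (pi : Fin n → ℝ) (i : Fin n) : ℝ :=
  sInf {t : ℝ | 0 ≤ t ∧ ∑ j, |transSemigroup Q t i j - pi j| ≤ 1 / 2}

/-- The relaxation time `t_rel = max{1/λ : λ a positive eigenvalue of -Q}`. -/
def relaxTime {n : ℕ} (Q : Matrix (Fin n) (Fin n) ℝ) : ℝ :=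
  sSup {r : ℝ | ∃ lam : ℝ, 0 < lam ∧ r = 1 / lam ∧
    ∃ v : Fin n → ℝ, v ≠ 0 ∧ (-Q).mulVec v = lam • v}

/-!
The voter model and the coalescing walks are dual through `D = discord Q`, where `D η S = 1`
exactly when `η` takes two values on the part of `S` in some irreducible component:
`Q_voter D = D Q_coalᵀ`. Let `ρ` be the Green measure of the voter model started from `μ_u` and
killed at consensus (`ρ Q_voter = -μ_u` off consensus), so that `∑ ρ = 𝔼_{μ_u} τ_cons`. Its image
`q = ρ D` vanishes on the coalesced sets, solves `Q_coal q = -(μ_u D)` off them, and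
`q [n] = ∑ ρ`. Off the coalesced sets `(μ_u D)(S)` lies between `2u(1-u)`, the probability that two
walkers in one component carry different opinions, and `1`. Since `g = 𝔼 τ_coal` solves the same
equation with right-hand side `-1`, the minimum principle for the coalescing walks gives
`2u(1-u) g ≤ q ≤ g`; evaluate at `S = [n]`.
-/

open Matrix

section MinimumPrinciple

variable {σ : Type*} [Fintype σ]

def IsRateMatrix (L : Matrix σ σ ℝ) : Prop :=
  (∀ a b, a ≠ b → 0 ≤ L a b) ∧ ∀ a, ∑ b, L a b = 0

def ReachableFromAll (L : Matrix σ σ ℝ) (A : Set σ) : Prop :=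
  ∀ s, ∃ t ∈ A, Relation.ReflTransGen (fun a b => 0 < L a b) s t

variable {L : Matrix σ σ ℝ} {A : Set σ}

theorem IsRateMatrix.apply_eq_of_forall_le_of_pos (hL : IsRateMatrix L) {w : σ → ℝ} {s t : σ}
    (hmin : ∀ r, w s ≤ w r) (hs : (L *ᵥ w) s ≤ 0) (hst : 0 < L s t) : w t = w s := by
  have hterm : ∀ r ∈ Finset.univ, 0 ≤ L s r * (w r - w s) := by
    intro r _
    rcases eq_or_ne s r with rfl | hsr
    · simp
    · exact mul_nonneg (hL.1 s r hsr) (sub_nonneg.2 (hmin r))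
  have hsum : ∑ r, L s r * (w r - w s) = (L *ᵥ w) s := by
    simp only [mul_sub, Finset.sum_sub_distrib, ← Finset.sum_mul, hL.2, zero_mul, sub_zero]
    rfl
  have hzero := (Finset.sum_eq_zero_iff_of_nonneg hterm).1
    (le_antisymm (hsum ▸ hs) (Finset.sum_nonneg hterm)) t (Finset.mem_univ t)
  linarith [(mul_eq_zero.1 hzero).resolve_left hst.ne']

theorem IsRateMatrix.nonneg_of_mulVec_nonpos (hL : IsRateMatrix L)
    (hreach : ReachableFromAll L A) {w : σ → ℝ} (hA : ∀ s ∈ A, 0 ≤ w s)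
    (hw : ∀ s ∉ A, (L *ᵥ w) s ≤ 0) (s : σ) : 0 ≤ w s := by
  by_contra! hneg
  obtain ⟨s₀, -, hmin⟩ := Finset.exists_min_image Finset.univ w ⟨s, Finset.mem_univ s⟩
  have hs₀ : w s₀ < 0 := (hmin s (Finset.mem_univ s)).trans_lt hneg
  obtain ⟨t, htA, hpath⟩ := hreach s₀
  have hconst : ∀ r, Relation.ReflTransGen (fun a b => 0 < L a b) s₀ r → w r = w s₀ := by
    intro r hr
    induction hr with
    | refl => rfl
    | @tail b c _ hbc ih =>
      have hmin_b : ∀ r, w b ≤ w r := fun r => ih ▸ hmin r (Finset.mem_univ r)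
      have hbA : b ∉ A := fun hb => (hA b hb).not_gt (ih ▸ hs₀)
      exact (hL.apply_eq_of_forall_le_of_pos hmin_b (hw b hbA) hbc).trans ih
  exact (hA t htA).not_gt (hconst t hpath ▸ hs₀)

theorem IsRateMatrix.le_of_mulVec_le (hL : IsRateMatrix L) (hreach : ReachableFromAll L A)
    {f g : σ → ℝ} (hA : ∀ s ∈ A, f s ≤ g s) (hfg : ∀ s ∉ A, (L *ᵥ g) s ≤ (L *ᵥ f) s)
    (s : σ) : f s ≤ g s := by
  have := hL.nonneg_of_mulVec_nonpos hreach (w := g - f) (fun s hs => sub_nonneg.2 (hA s hs))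
    (fun s hs => by simpa [mulVec_sub] using hfg s hs) s
  simpa using this

theorem IsRateMatrix.eq_zero_of_mulVec_eq_zero (hL : IsRateMatrix L)
    (hreach : ReachableFromAll L A) {x : σ → ℝ} (hA : ∀ s ∈ A, x s = 0)
    (hx : ∀ s ∉ A, (L *ᵥ x) s = 0) : x = 0 := by
  funext s
  refine le_antisymm (hL.le_of_mulVec_le hreach (g := 0) (fun s hs => (hA s hs).le)
    (fun s hs => by simp [hx s hs]) s) (hL.le_of_mulVec_le hreach (f := 0)
    (fun s hs => (hA s hs).ge) (fun s hs => by simp [hx s hs]) s)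

theorem exists_vecMul_eq_of_dirichlet_unique [DecidableEq σ]
    (huniq : ∀ x : σ → ℝ, (∀ s ∈ A, x s = 0) → (∀ s ∉ A, (L *ᵥ x) s = 0) → x = 0)
    (b : σ → ℝ) : ∃ ρ : σ → ℝ, (∀ s ∈ A, ρ s = 0) ∧ ∀ t ∉ A, (ρ ᵥ* L) t = b t := by
  -- `L` with its rows in `A` replaced by those of the identity: injective, hence invertible.
  let K : Matrix σ σ ℝ := fun s t => if s ∈ A then (1 : Matrix σ σ ℝ) s t else L s t
  have hK : ∀ x s, (K *ᵥ x) s = if s ∈ A then x s else (L *ᵥ x) s := by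
    intro x s
    by_cases hs : s ∈ A <;> simp [K, hs, mulVec, dotProduct, one_apply]
  have hinj : Function.Injective K.mulVec := by
    refine (injective_iff_map_eq_zero' (mulVecLin K)).2 fun x => ⟨fun hx => ?_, ?_⟩
    · refine huniq x (fun s hs => ?_) (fun s hs => ?_)
      · simpa [hK, hs] using congrFun hx s
      · simpa [hK, hs] using congrFun hx s
    · rintro rfl; simp
  obtain ⟨ρ', hρ'⟩ := vecMul_surjective_iff_isUnit.2
    (mulVec_injective_iff_isUnit.1 hinj) b
  refine ⟨fun s => if s ∈ A then 0 else ρ' s, fun s hs => if_pos hs, fun t ht => ?_⟩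
  rw [← hρ']
  refine Finset.sum_congr rfl fun s _ => ?_
  by_cases hs : s ∈ A
  · simp [K, hs, one_apply, show s ≠ t from fun h => ht (h ▸ hs)]
  · simp [K, hs]

theorem sum_mul_eq_sum_of_vecMul_eq {μ h ρ : σ → ℝ} (hhA : ∀ s ∈ A, h s = 0)
    (hh : ∀ s ∉ A, (L *ᵥ h) s = -1) (hρA : ∀ s ∈ A, ρ s = 0)
    (hρ : ∀ t ∉ A, (ρ ᵥ* L) t = -μ t) : ∑ s, μ s * h s = ∑ s, ρ s := by
  calc ∑ s, μ s * h s = -((ρ ᵥ* L) ⬝ᵥ h) := by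
        rw [dotProduct, ← Finset.sum_neg_distrib]
        refine Finset.sum_congr rfl fun s _ => ?_
        by_cases hs : s ∈ A
        · simp [hhA s hs]
        · rw [hρ s hs]; ring
    _ = -(ρ ⬝ᵥ (L *ᵥ h)) := by rw [dotProduct_mulVec]
    _ = ∑ s, ρ s := by
        rw [dotProduct, ← Finset.sum_neg_distrib]
        refine Finset.sum_congr rfl fun s _ => ?_
        by_cases hs : s ∈ A
        · simp [hρA s hs]
        · rw [hh s hs]; ring

end MinimumPrinciple

section JumpGenerator

variable {n : ℕ} {σ : Type*} [DecidableEq σ]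

/-- The generator of the chain on `σ` in which, for each site `x ∈ sites s` and each `y ≠ x`,
the state `s` jumps to `move s x y` at rate `Q x y`. -/
def jumpGen (Q : Matrix (Fin n) (Fin n) ℝ) (sites : σ → Finset (Fin n))
    (move : σ → Fin n → Fin n → σ) : Matrix σ σ ℝ := fun s s' =>
  if s = s' then
    -∑ x ∈ sites s, ∑ y, (if x ≠ y ∧ move s x y ≠ s then Q x y else 0)
  else
    ∑ x ∈ sites s, ∑ y, (if x ≠ y ∧ move s x y = s' then Q x y else 0)

theorem voterGen_eq_jumpGen (Q : Matrix (Fin n) (Fin n) ℝ) :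
    voterGen Q = jumpGen Q (fun _ => Finset.univ) fun η i j => Function.update η i (η j) :=
  rfl

theorem coalGen_eq_jumpGen (Q : Matrix (Fin n) (Fin n) ℝ) :
    coalGen Q = jumpGen Q id fun S x y => insert y (S.erase x) :=
  rfl

variable {Q : Matrix (Fin n) (Fin n) ℝ} {sites : σ → Finset (Fin n)}
  {move : σ → Fin n → Fin n → σ}

theorem jumpGen_apply (s s' : σ) :
    jumpGen Q sites move s s' = ∑ x ∈ sites s, ∑ y, (if x ≠ y then Q x y else 0) *
      ((if move s x y = s' then 1 else 0) - if s = s' then 1 else 0) := by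
  unfold jumpGen
  split_ifs with h
  · subst h
    rw [← Finset.sum_neg_distrib]
    refine Finset.sum_congr rfl fun x _ => ?_
    rw [← Finset.sum_neg_distrib]
    refine Finset.sum_congr rfl fun y _ => ?_
    split_ifs <;> simp_all
  · refine Finset.sum_congr rfl fun x _ => Finset.sum_congr rfl fun y _ => ?_
    split_ifs <;> simp_all

theorem jumpGen_mulVec [Fintype σ] (G : σ → ℝ) (s : σ) :
    (jumpGen Q sites move *ᵥ G) s =
      ∑ x ∈ sites s, ∑ y, (if x ≠ y then Q x y else 0) * (G (move s x y) - G s) := by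
  simp only [mulVec, dotProduct, jumpGen_apply, Finset.sum_mul]
  rw [Finset.sum_comm]
  refine Finset.sum_congr rfl fun x _ => ?_
  rw [Finset.sum_comm]
  refine Finset.sum_congr rfl fun y _ => ?_
  simp [mul_assoc, ← Finset.mul_sum, sub_mul, Finset.sum_sub_distrib]

theorem isRateMatrix_jumpGen [Fintype σ] (hQ : ∀ x y, x ≠ y → 0 ≤ Q x y) :
    IsRateMatrix (jumpGen Q sites move) := by
  refine ⟨fun s s' hss' => ?_, fun s => ?_⟩
  · rw [jumpGen, if_neg hss']
    refine Finset.sum_nonneg fun x _ => Finset.sum_nonneg fun y _ => ?_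
    split_ifs with h
    exacts [hQ x y h.1, le_rfl]
  · simpa [mulVec, dotProduct] using jumpGen_mulVec (Q := Q) (sites := sites) (move := move)
      (fun _ => 1) s

theorem isRateMatrix_voterGen (hQ : IsGenerator Q) : IsRateMatrix (voterGen Q) :=
  isRateMatrix_jumpGen hQ.1

theorem isRateMatrix_coalGen (hQ : IsGenerator Q) : IsRateMatrix (coalGen Q) :=
  isRateMatrix_jumpGen hQ.1

theorem jumpGen_pos (hQ : ∀ x y, x ≠ y → 0 ≤ Q x y) {s : σ} {x y : Fin n} (hx : x ∈ sites s)
    (hxy : x ≠ y) (hQxy : 0 < Q x y) (hmove : move s x y ≠ s) :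
    0 < jumpGen Q sites move s (move s x y) := by
  rw [jumpGen, if_neg hmove.symm]
  have hterm : ∀ x' y', 0 ≤ if x' ≠ y' ∧ move s x' y' = move s x y then Q x' y' else 0 := by
    intro x' y'
    split_ifs with h
    exacts [hQ x' y' h.1, le_rfl]
  refine Finset.sum_pos' (fun x' _ => Finset.sum_nonneg fun y' _ => hterm x' y')
    ⟨x, hx, Finset.sum_pos' (fun y' _ => hterm x y') ⟨y, Finset.mem_univ y, ?_⟩⟩
  rwa [if_pos ⟨hxy, rfl⟩]

end JumpGenerator

section Reachability

variable {n : ℕ} {Q : Matrix (Fin n) (Fin n) ℝ}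

theorem sameComp_symm {i j : Fin n} (h : SameComp Q i j) : SameComp Q j i := by
  induction h with
  | refl => exact .refl
  | tail _ hbc ih => exact .head ⟨hbc.1.symm, hbc.2.symm⟩ ih

theorem exists_rel_ne_of_reflTransGen {α β : Type*} {r : α → α → Prop} {f : α → β} {x y : α}
    (h : Relation.ReflTransGen r x y) (hne : f x ≠ f y) : ∃ a b, r a b ∧ f a ≠ f b := by
  by_contra! hcon
  apply hne
  clear hne
  induction h with
  | refl => rfl
  | tail _ hbc ih => exact ih.trans (hcon _ _ hbc)

theorem rate_pos_of_adj {pi : Fin n → ℝ} (hQ : IsGenerator Q) (hrev : Reversible Q pi)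
    (hpi : ∀ i, 0 < pi i) {a b : Fin n} (hab : a ≠ b ∧ (Q a b ≠ 0 ∨ Q b a ≠ 0)) :
    0 < Q a b := by
  refine (hQ.1 a b hab.1).lt_of_ne' fun h0 => ?_
  have hba : Q b a = 0 := by
    simpa [h0, (hpi b).ne'] using (hrev a b).symm
  exact hab.2.elim (· h0) (· hba)

/-- Some site of opinion `false` can copy the opinion of a neighbour of opinion `true`; this
lowers the number of `false` opinions. -/
theorem reachableFromAll_voterGen (hQ : ∀ x y, x ≠ y → 0 ≤ Q x y)
    (hrate : ∀ a b, a ≠ b ∧ (Q a b ≠ 0 ∨ Q b a ≠ 0) → 0 < Q a b) :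
    ReachableFromAll (voterGen Q) (ConsensusSet Q) := by
  intro η
  induction hk : (Finset.univ.filter fun i => η i = false).card using Nat.strong_induction_on
    generalizing η with
  | _ k ih =>
    by_cases hη : η ∈ ConsensusSet Q
    · exact ⟨η, hη, .refl⟩
    obtain ⟨a, b, hab, hηab⟩ : ∃ a b, (a ≠ b ∧ (Q a b ≠ 0 ∨ Q b a ≠ 0)) ∧
        η a = false ∧ η b = true := by
      simp only [ConsensusSet, Set.mem_ofPred_eq, not_forall] at hη
      obtain ⟨i, j, hij, hne⟩ := hη
      obtain ⟨a, b, hab, hne⟩ := exists_rel_ne_of_reflTransGen (f := η) hij hne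
      cases ha : η a
      · exact ⟨a, b, hab, ha, by simpa [ha] using hne.symm⟩
      · exact ⟨b, a, ⟨hab.1.symm, hab.2.symm⟩, by simpa [ha] using hne.symm, ha⟩
    have hmove : Function.update η a (η b) ≠ η := fun h => by
      simpa [hηab] using congrFun h a
    have hstep : 0 < voterGen Q η (Function.update η a (η b)) := by
      rw [voterGen_eq_jumpGen]
      exact jumpGen_pos hQ (Finset.mem_univ a) hab.1 (hrate a b hab) hmove
    have hcard : (Finset.univ.filter fun i => Function.update η a (η b) i = false) =
        (Finset.univ.filter fun i => η i = false).erase a := by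
      ext i
      by_cases hi : i = a <;> simp [hi, hηab]
    obtain ⟨ξ, hξ, hpath⟩ := ih _ (by
      rw [← hk, hcard]
      exact Finset.card_erase_lt_of_mem (by simp [hηab])) _ rfl
    exact ⟨ξ, hξ, .head hstep hpath⟩

/-- Walking the walker at `x` along a path to the walker at `y` makes two walkers coalesce. -/
theorem exists_coalGen_reach_card_lt (hQ : ∀ x y, x ≠ y → 0 ≤ Q x y)
    (hrate : ∀ a b, a ≠ b ∧ (Q a b ≠ 0 ∨ Q b a ≠ 0) → 0 < Q a b)
    {x y : Fin n} (hxy : SameComp Q x y) :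
    ∀ S : Finset (Fin n), x ∈ S → y ∈ S → x ≠ y →
      ∃ T, Relation.ReflTransGen (fun A B => 0 < coalGen Q A B) S T ∧ T.card < S.card := by
  induction hxy using Relation.ReflTransGen.head_induction_on with
  | refl => exact fun _ _ _ h => absurd rfl h
  | @head a z haz _ ih =>
    intro S haS hyS hay
    have hmove : insert z (S.erase a) ≠ S := fun h =>
      (show a ∉ insert z (S.erase a) by simp [haz.1]) (by rw [h]; exact haS)
    have hstep : 0 < coalGen Q S (insert z (S.erase a)) := by
      rw [coalGen_eq_jumpGen]
      exact jumpGen_pos hQ haS haz.1 (hrate a z haz) hmove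
    by_cases hzS : z ∈ S
    · refine ⟨_, .single hstep, ?_⟩
      rw [Finset.insert_eq_of_mem (Finset.mem_erase.2 ⟨haz.1.symm, hzS⟩)]
      exact Finset.card_erase_lt_of_mem haS
    · have hzy : z ≠ y := fun h => hzS (h ▸ hyS)
      obtain ⟨T, hpath, hcard⟩ := ih _ (Finset.mem_insert_self _ _)
        (Finset.mem_insert_of_mem (Finset.mem_erase.2 ⟨Ne.symm hay, hyS⟩)) hzy
      refine ⟨T, .head hstep hpath, hcard.trans_le ?_⟩
      rw [Finset.card_insert_of_notMem (fun h => hzS (Finset.mem_of_mem_erase h)),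
        Finset.card_erase_add_one haS]

theorem reachableFromAll_coalGen (hQ : ∀ x y, x ≠ y → 0 ≤ Q x y)
    (hrate : ∀ a b, a ≠ b ∧ (Q a b ≠ 0 ∨ Q b a ≠ 0) → 0 < Q a b) :
    ReachableFromAll (coalGen Q) (CoalescedSet Q) := by
  intro S
  induction hk : S.card using Nat.strong_induction_on generalizing S with
  | _ k ih =>
    by_cases hS : S ∈ CoalescedSet Q
    · exact ⟨S, hS, .refl⟩
    simp only [CoalescedSet, Set.mem_ofPred_eq, not_forall] at hS
    obtain ⟨x, hx, y, hy, hxy, hne⟩ := hS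
    obtain ⟨T, hST, hcard⟩ := exists_coalGen_reach_card_lt hQ hrate hxy S hx hy hne
    obtain ⟨U, hU, hTU⟩ := ih _ (hk ▸ hcard) T rfl
    exact ⟨U, hU, hST.trans hTU⟩

end Reachability

section Duality

variable {n : ℕ} {Q : Matrix (Fin n) (Fin n) ℝ}

def Concordant (Q : Matrix (Fin n) (Fin n) ℝ) (η : Fin n → Bool) (S : Finset (Fin n)) : Prop :=
  ∀ x ∈ S, ∀ y ∈ S, SameComp Q x y → η x = η y

/-- The duality function between the voter model and the coalescing walks. -/
def discord (Q : Matrix (Fin n) (Fin n) ℝ) : Matrix (Fin n → Bool) (Finset (Fin n)) ℝ :=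
  fun η S => if Concordant Q η S then 0 else 1

theorem concordant_iff_of_map {η η' : Fin n → Bool} {S S' : Finset (Fin n)} (φ : Fin n → Fin n)
    (hmaps : ∀ z ∈ S, φ z ∈ S') (hsurj : ∀ z' ∈ S', ∃ z ∈ S, φ z = z')
    (hval : ∀ z ∈ S, η' z = η (φ z)) (hcomp : ∀ z ∈ S, SameComp Q z (φ z)) :
    Concordant Q η' S ↔ Concordant Q η S' := by
  constructor
  · intro h x' hx' y' hy' hxy
    obtain ⟨x, hx, rfl⟩ := hsurj x' hx'
    obtain ⟨y, hy, rfl⟩ := hsurj y' hy'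
    rw [← hval x hx, ← hval y hy]
    exact h x hx y hy (((hcomp x hx).trans hxy).trans (sameComp_symm (hcomp y hy)))
  · intro h x hx y hy hxy
    rw [hval x hx, hval y hy]
    exact h _ (hmaps x hx) _ (hmaps y hy)
      (((sameComp_symm (hcomp x hx)).trans hxy).trans (hcomp y hy))

theorem discord_update_of_mem {i j : Fin n} (hij : SameComp Q i j) (η : Fin n → Bool)
    {S : Finset (Fin n)} (hi : i ∈ S) :
    discord Q (Function.update η i (η j)) S = discord Q η (insert j (S.erase i)) := by
  have key := concordant_iff_of_map (Q := Q) (η := η) (η' := Function.update η i (η j))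
    (S := S) (S' := insert j (S.erase i)) (Function.update id i j)
    (fun z hz => by by_cases hzi : z = i <;> simp [hzi, hz])
    (fun z' hz' => by
      rcases Finset.mem_insert.1 hz' with rfl | hz'
      · exact ⟨i, hi, by simp⟩
      · exact ⟨z', (Finset.mem_erase.1 hz').2, by simp [(Finset.mem_erase.1 hz').1]⟩)
    (fun z _ => by by_cases hzi : z = i <;> simp [hzi])
    (fun z _ => by
      by_cases hzi : z = i
      · simpa [hzi] using hij
      · simp only [ne_eq, hzi, not_false_eq_true, Function.update_of_ne, id_eq]
        exact .refl)
  simp only [discord, key]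

theorem discord_update_of_notMem {i : Fin n} (b : Bool) (η : Fin n → Bool)
    {S : Finset (Fin n)} (hi : i ∉ S) :
    discord Q (Function.update η i b) S = discord Q η S := by
  have key := concordant_iff_of_map (Q := Q) (η := η) (η' := Function.update η i b)
    (S := S) (S' := S) id (fun z hz => hz) (fun z hz => ⟨z, hz, rfl⟩)
    (fun z hz => Function.update_of_ne (ne_of_mem_of_not_mem hz hi) _ _)
    (fun _ _ => .refl)
  simp only [discord, key]

theorem voterGen_mul_discord : voterGen Q * discord Q = discord Q * (coalGen Q)ᵀ := by
  ext η S
  rw [mul_apply, mul_apply]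
  simp only [transpose_apply, mul_comm (discord Q η _)]
  change (voterGen Q *ᵥ fun ξ => discord Q ξ S) η = (coalGen Q *ᵥ discord Q η) S
  rw [voterGen_eq_jumpGen, coalGen_eq_jumpGen, jumpGen_mulVec, jumpGen_mulVec, id_eq,
    ← Finset.sum_subset (Finset.subset_univ S) fun i _ hi =>
    Finset.sum_eq_zero fun j _ => by simp [discord_update_of_notMem _ η hi]]
  refine Finset.sum_congr rfl fun i hi => Finset.sum_congr rfl fun j _ => ?_
  by_cases hQij : i ≠ j ∧ Q i j ≠ 0
  · rw [discord_update_of_mem (.single ⟨hQij.1, .inl hQij.2⟩) η hi]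
  · by_cases hij : i = j <;> simp_all

theorem discord_eq_zero_of_mem_consensusSet {η : Fin n → Bool} (hη : η ∈ ConsensusSet Q)
    (S : Finset (Fin n)) : discord Q η S = 0 :=
  if_pos fun x _ y _ hxy => hη x y hxy

theorem discord_eq_zero_of_mem_coalescedSet {S : Finset (Fin n)} (hS : S ∈ CoalescedSet Q)
    (η : Fin n → Bool) : discord Q η S = 0 :=
  if_pos fun x hx y hy hxy => by rw [hS x hx y hy hxy]

theorem discord_univ_of_notMem_consensusSet {η : Fin n → Bool} (hη : η ∉ ConsensusSet Q) :
    discord Q η Finset.univ = 1 :=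
  if_neg fun h => hη fun x y hxy => h x (Finset.mem_univ x) y (Finset.mem_univ y) hxy

theorem discord_le_one (η : Fin n → Bool) (S : Finset (Fin n)) : discord Q η S ≤ 1 := by
  unfold discord; split_ifs <;> norm_num

theorem ite_ne_le_discord {η : Fin n → Bool} {S : Finset (Fin n)} {x y : Fin n} (hx : x ∈ S)
    (hy : y ∈ S) (hxy : SameComp Q x y) : (if η x ≠ η y then 1 else 0) ≤ discord Q η S := by
  unfold discord
  split_ifs with hne hcon
  · exact absurd (hcon x hx y hy hxy) hne
  all_goals norm_num

theorem vecMul_discord_univ {ρ : (Fin n → Bool) → ℝ} (hρ : ∀ η ∈ ConsensusSet Q, ρ η = 0) :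
    (ρ ᵥ* discord Q) Finset.univ = ∑ η, ρ η := by
  refine Finset.sum_congr rfl fun η _ => ?_
  by_cases hη : η ∈ ConsensusSet Q
  · simp [hρ η hη]
  · simp [discord_univ_of_notMem_consensusSet hη]

theorem vecMul_discord_eq_zero {ρ : (Fin n → Bool) → ℝ} {S : Finset (Fin n)}
    (hS : S ∈ CoalescedSet Q) : (ρ ᵥ* discord Q) S = 0 :=
  Finset.sum_eq_zero fun η _ => by simp [discord_eq_zero_of_mem_coalescedSet hS]

theorem coalGen_mulVec_vecMul_discord {ρ μ : (Fin n → Bool) → ℝ}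
    (hρ : ∀ η ∉ ConsensusSet Q, (ρ ᵥ* voterGen Q) η = -μ η) :
    coalGen Q *ᵥ (ρ ᵥ* discord Q) = -(μ ᵥ* discord Q) := by
  rw [← vecMul_transpose, vecMul_vecMul, ← voterGen_mul_discord, ← vecMul_vecMul]
  funext S
  change ∑ η, (ρ ᵥ* voterGen Q) η * discord Q η S = -∑ η, μ η * discord Q η S
  rw [← Finset.sum_neg_distrib]
  refine Finset.sum_congr rfl fun η _ => ?_
  by_cases hη : η ∈ ConsensusSet Q
  · simp [discord_eq_zero_of_mem_consensusSet hη]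
  · rw [hρ η hη, neg_mul]

end Duality

section Bernoulli

variable {n : ℕ} {u : ℝ}

theorem bernWeight_nonneg (hu : u ∈ Set.Icc (0 : ℝ) 1) (η : Fin n → Bool) :
    0 ≤ bernWeight u η :=
  Finset.prod_nonneg fun i _ => by split_ifs <;> linarith [hu.1, hu.2]

theorem sum_bernWeight_mul_prod (f : Fin n → Bool → ℝ) :
    ∑ η, bernWeight u η * ∏ i, f i (η i) = ∏ i, (u * f i true + (1 - u) * f i false) := by
  simp only [bernWeight, ← Finset.prod_mul_distrib]
  rw [← Fintype.prod_sum fun i b => (if b then u else 1 - u) * f i b]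
  simp

theorem sum_bernWeight : ∑ η : Fin n → Bool, bernWeight u η = 1 := by
  simpa using sum_bernWeight_mul_prod (u := u) fun _ _ => (1 : ℝ)

theorem sum_bernWeight_mul_mul {x y : Fin n} (hxy : x ≠ y) (p q : Bool → ℝ) :
    ∑ η, bernWeight u η * (p (η x) * q (η y)) =
      (u * p true + (1 - u) * p false) * (u * q true + (1 - u) * q false) := by
  let f : Fin n → Bool → ℝ := fun i => if i = x then p else if i = y then q else 1
  have hprod : ∀ g : Fin n → ℝ, (∀ i, i ≠ x → i ≠ y → g i = 1) → ∏ i, g i = g x * g y :=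
    fun g hg => Finset.prod_eq_mul x y hxy (fun i _ hi => hg i hi.1 hi.2) (by simp) (by simp)
  have hf : ∀ η : Fin n → Bool, ∏ i, f i (η i) = p (η x) * q (η y) := fun η => by
    rw [hprod _ fun i hix hiy => by simp [f, hix, hiy]]
    simp [f, hxy.symm]
  simp only [← hf, sum_bernWeight_mul_prod]
  rw [hprod _ fun i hix hiy => by simp [f, hix, hiy]]
  simp [f, hxy.symm]

theorem sum_bernWeight_mul_ne {x y : Fin n} (hxy : x ≠ y) :
    ∑ η, bernWeight u η * (if η x ≠ η y then 1 else 0) = 2 * u * (1 - u) := by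
  let p : Bool → ℝ := fun b => if b then 1 else 0
  let q : Bool → ℝ := fun b => if b then 0 else 1
  calc ∑ η, bernWeight u η * (if η x ≠ η y then 1 else 0)
      = ∑ η, bernWeight u η * (p (η x) * q (η y)) +
          ∑ η, bernWeight u η * (q (η x) * p (η y)) := by
        rw [← Finset.sum_add_distrib]
        refine Finset.sum_congr rfl fun η _ => ?_
        rw [← mul_add]
        cases η x <;> cases η y <;> simp [p, q]
    _ = 2 * u * (1 - u) := by
        rw [sum_bernWeight_mul_mul hxy, sum_bernWeight_mul_mul hxy]
        norm_num [p, q]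
        ring

end Bernoulli

section DisagreementProbability

variable {n : ℕ} {Q : Matrix (Fin n) (Fin n) ℝ} {u : ℝ}

theorem vecMul_bernWeight_discord_le_one (hu : u ∈ Set.Icc (0 : ℝ) 1) (S : Finset (Fin n)) :
    (bernWeight u ᵥ* discord Q) S ≤ 1 :=
  calc ∑ η, bernWeight u η * discord Q η S ≤ ∑ η, bernWeight u η :=
        Finset.sum_le_sum fun η _ =>
          mul_le_of_le_one_right (bernWeight_nonneg hu η) (discord_le_one η S)
    _ = 1 := sum_bernWeight

theorem le_vecMul_bernWeight_discord (hu : u ∈ Set.Icc (0 : ℝ) 1) {S : Finset (Fin n)}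
    (hS : S ∉ CoalescedSet Q) : 2 * u * (1 - u) ≤ (bernWeight u ᵥ* discord Q) S := by
  simp only [CoalescedSet, Set.mem_ofPred_eq, not_forall] at hS
  obtain ⟨x, hx, y, hy, hxy, hne⟩ := hS
  rw [← sum_bernWeight_mul_ne hne]
  exact Finset.sum_le_sum fun η _ =>
    mul_le_mul_of_nonneg_left (ite_ne_le_discord hx hy hxy) (bernWeight_nonneg hu η)

end DisagreementProbability

/-- **Lemma (duality).** For the `Q`-voter model started from i.i.d. Bernoulli(u)
opinions, `t_cons^{(u)} ≤ t_coal`; if moreover the dual chain is irreducible, then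
`t_cons^{(u)} ≥ 2u(1-u) t_coal`. -/
theorem duality_consensus_coalescence {n : ℕ} (Q : Matrix (Fin n) (Fin n) ℝ)
    (pi : Fin n → ℝ) (hQ : IsGenerator Q) (hrev : Reversible Q pi)
    (hpi : IsStationaryDist Q pi) (u : ℝ) (hu : u ∈ Set.Ioo (0 : ℝ) 1)
    (tcons tcoal : ℝ) (hcons : IsExpConsensusTime Q u tcons)
    (hcoal : IsExpCoalTime Q tcoal) :
    tcons ≤ tcoal ∧ (Irreducible Q → 2 * u * (1 - u) * tcoal ≤ tcons) := by
  obtain ⟨h, ⟨-, hh0, hh, -⟩, rfl⟩ := hcons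
  obtain ⟨g, ⟨-, hg0, hg, -⟩, rfl⟩ := hcoal
  have hu' := Set.Ioo_subset_Icc_self hu
  have hrate : ∀ a b, a ≠ b ∧ (Q a b ≠ 0 ∨ Q b a ≠ 0) → 0 < Q a b :=
    fun a b => rate_pos_of_adj hQ hrev hpi.1
  have hCg : ∀ S ∉ CoalescedSet Q, (coalGen Q *ᵥ g) S = -1 := fun S hS => hg S trivial hS
  obtain ⟨ρ, hρ0, hρ⟩ := exists_vecMul_eq_of_dirichlet_unique
    (fun _ => (isRateMatrix_voterGen hQ).eq_zero_of_mulVec_eq_zero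
      (reachableFromAll_voterGen hQ.1 hrate)) (-bernWeight u)
  have hCq := coalGen_mulVec_vecMul_discord hρ
  rw [sum_mul_eq_sum_of_vecMul_eq (fun s hs => hh0 s ⟨trivial, hs⟩)
    (fun s hs => hh s trivial hs) hρ0 hρ, ← vecMul_discord_univ hρ0]
  have hC := isRateMatrix_coalGen hQ
  have hCreach := reachableFromAll_coalGen hQ.1 hrate
  refine ⟨hC.le_of_mulVec_le hCreach (fun S hS => ?_) (fun S hS => ?_) _, fun _ =>
    hC.le_of_mulVec_le hCreach (f := (2 * u * (1 - u)) • g) (fun S hS => ?_) (fun S hS => ?_) _⟩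
  · rw [vecMul_discord_eq_zero hS, hg0 S ⟨trivial, hS⟩]
  · rw [hCq, hCg S hS, Pi.neg_apply, neg_le_neg_iff]
    exact vecMul_bernWeight_discord_le_one hu' S
  · simp [vecMul_discord_eq_zero hS, hg0 S ⟨trivial, hS⟩]
  · rw [hCq, mulVec_smul, Pi.smul_apply, hCg S hS]
    simpa using le_vecMul_bernWeight_discord hu' hS

end VoterIRG
end
end

section
/- For a reversible irreducible continuous-time Markov chain on [n] with stationary distribution π and exit rates q(i) = −Q(i,i), the expected meeting time of two independent copies started from independent π-distributed states satisfies t^π_meet ≥ (1 − ∑_{i∈[n]} π(i)²)² / (4 ∑_{i∈[n]} q(i) π(i)²). -/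
open scoped BigOperators Classical
open MeasureTheory Filter

noncomputable section

namespace VoterIRG

/-!
Let `G` be the generator of the pair chain, `μ = π ⊗ π` its stationary law and `Δ` the diagonal,
so that the meeting time `m` vanishes on `Δ` and `G m = -1` off `Δ`. Stationarity turns
`∑_{Δ} μ (G m)` into `μ(Δᶜ) = 1 - ∑ π²`. In each row of `G`, Cauchy–Schwarz bounds `(G m)²` by the
exit rate times the local Dirichlet energy of `m`; summing over `Δ` with a second Cauchy–Schwarz and
using that the full Dirichlet form equals `-2 ⟨m, G m⟩_μ = 2 t_meet^π`, we get
`μ(Δᶜ)² ≤ 2 (∑_{Δ} μ q_G) t_meet^π`, and `q_G(z, z) = 2 q(z)`.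
-/

open Finset Matrix

section Generator

variable {S : Type*} [Fintype S] {G : Matrix S S ℝ}

lemma neg_diag_nonneg_of_generator (hoff : ∀ s t, s ≠ t → 0 ≤ G s t)
    (hrow : ∀ s, ∑ t, G s t = 0) (s : S) : 0 ≤ -G s s := by
  have h := hrow s
  rw [← add_sum_erase _ _ (mem_univ s)] at h
  linarith [sum_nonneg fun t (ht : t ∈ univ.erase s) => hoff s t (ne_of_mem_erase ht).symm]

lemma sq_mulVec_le_of_generator (hoff : ∀ s t, s ≠ t → 0 ≤ G s t)
    (hrow : ∀ s, ∑ t, G s t = 0) (f : S → ℝ) (s : S) :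
    (G *ᵥ f) s ^ 2 ≤ -G s s * ∑ t, G s t * (f t - f s) ^ 2 := by
  have hcentered : (G *ᵥ f) s = ∑ t ∈ univ.erase s, G s t * (f t - f s) := by
    rw [sum_erase _ (by simp), mulVec, dotProduct]
    simp only [mul_sub, sum_sub_distrib, ← sum_mul, hrow s, zero_mul, sub_zero]
  have hrate : -G s s = ∑ t ∈ univ.erase s, G s t := by
    linarith [add_sum_erase _ (G s) (mem_univ s), hrow s]
  have henergy : ∑ t, G s t * (f t - f s) ^ 2 = ∑ t ∈ univ.erase s, G s t * (f t - f s) ^ 2 :=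
    (sum_erase _ (by simp)).symm
  rw [hcentered, hrate, henergy]
  refine sum_sq_le_sum_mul_sum_of_sq_le_mul _ (fun t ht => hoff s t (ne_of_mem_erase ht).symm)
    (fun t ht => mul_nonneg (hoff s t (ne_of_mem_erase ht).symm) (sq_nonneg _))
    fun t _ => le_of_eq (by ring)

variable {μ : S → ℝ}

lemma sum_mul_mulVec_eq_zero (hstat : μ ᵥ* G = 0) (f : S → ℝ) :
    ∑ s, μ s * (G *ᵥ f) s = 0 := by
  rw [← dotProduct, dotProduct_mulVec, hstat, zero_dotProduct]

lemma sum_dirichlet_eq (hrow : ∀ s, ∑ t, G s t = 0) (hstat : μ ᵥ* G = 0) (f : S → ℝ) :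
    ∑ s, μ s * ∑ t, G s t * (f t - f s) ^ 2 = -2 * ∑ s, μ s * f s * (G *ᵥ f) s := by
  have hexpand : ∀ s, μ s * ∑ t, G s t * (f t - f s) ^ 2 =
      μ s * (G *ᵥ fun t => f t ^ 2) s - 2 * (μ s * f s * (G *ᵥ f) s)
        + μ s * f s ^ 2 * ∑ t, G s t := by
    intro s
    simp only [mulVec, dotProduct, mul_sum, ← sum_sub_distrib, ← sum_add_distrib]
    exact sum_congr rfl fun t _ => by ring
  simp only [hexpand, sum_add_distrib, sum_sub_distrib, hrow, mul_zero, sum_const_zero,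
    sum_mul_mulVec_eq_zero hstat, ← mul_sum]
  ring

lemma dirichlet_term_nonneg (hoff : ∀ s t, s ≠ t → 0 ≤ G s t) (hμ : ∀ s, 0 ≤ μ s)
    (f : S → ℝ) (s : S) : 0 ≤ μ s * ∑ t, G s t * (f t - f s) ^ 2 := by
  refine mul_nonneg (hμ s) (sum_nonneg fun t _ => ?_)
  rcases eq_or_ne s t with rfl | hst
  · simp
  · exact mul_nonneg (hoff s t hst) (sq_nonneg _)

theorem sq_sum_compl_le_of_hitting [DecidableEq S]
    (hoff : ∀ s t, s ≠ t → 0 ≤ G s t) (hrow : ∀ s, ∑ t, G s t = 0)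
    (hμ : ∀ s, 0 ≤ μ s) (hstat : μ ᵥ* G = 0) (A : Finset S) {h : S → ℝ}
    (hA : ∀ s ∈ A, h s = 0) (hAc : ∀ s ∉ A, (G *ᵥ h) s = -1) :
    (∑ s ∈ Aᶜ, μ s) ^ 2 ≤ 2 * (∑ s ∈ A, μ s * -G s s) * ∑ s, μ s * h s := by
  have hflux : ∑ s ∈ A, μ s * (G *ᵥ h) s = ∑ s ∈ Aᶜ, μ s := by
    have hcompl : ∑ s ∈ Aᶜ, μ s * (G *ᵥ h) s = -∑ s ∈ Aᶜ, μ s := by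
      rw [← sum_neg_distrib]
      exact sum_congr rfl fun s hs => by rw [hAc s (mem_compl.1 hs), mul_neg_one]
    linarith [sum_add_sum_compl A (fun s => μ s * (G *ᵥ h) s), sum_mul_mulVec_eq_zero hstat h]
  have hdirichlet : ∑ s, μ s * ∑ t, G s t * (h t - h s) ^ 2 = 2 * ∑ s, μ s * h s := by
    rw [sum_dirichlet_eq hrow hstat, mul_sum, mul_sum]
    refine sum_congr rfl fun s _ => ?_
    by_cases hs : s ∈ A
    · simp [hA s hs]
    · rw [hAc s hs]; ring
  calc (∑ s ∈ Aᶜ, μ s) ^ 2 = (∑ s ∈ A, μ s * (G *ᵥ h) s) ^ 2 := by rw [hflux]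
    _ ≤ (∑ s ∈ A, μ s * -G s s) * ∑ s ∈ A, μ s * ∑ t, G s t * (h t - h s) ^ 2 := by
      refine sum_sq_le_sum_mul_sum_of_sq_le_mul _
        (fun s _ => mul_nonneg (hμ s) (neg_diag_nonneg_of_generator hoff hrow s))
        (fun s _ => dirichlet_term_nonneg hoff hμ h s) fun s _ => ?_
      calc (μ s * (G *ᵥ h) s) ^ 2 = μ s ^ 2 * (G *ᵥ h) s ^ 2 := by ring
        _ ≤ μ s ^ 2 * (-G s s * ∑ t, G s t * (h t - h s) ^ 2) :=
          mul_le_mul_of_nonneg_left (sq_mulVec_le_of_generator hoff hrow h s) (sq_nonneg _)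
        _ = _ := by ring
    _ ≤ (∑ s ∈ A, μ s * -G s s) * ∑ s, μ s * ∑ t, G s t * (h t - h s) ^ 2 :=
      mul_le_mul_of_nonneg_left (sum_le_univ_sum_of_nonneg (dirichlet_term_nonneg hoff hμ h))
        (sum_nonneg fun s _ => mul_nonneg (hμ s) (neg_diag_nonneg_of_generator hoff hrow s))
    _ = 2 * (∑ s ∈ A, μ s * -G s s) * ∑ s, μ s * h s := by rw [hdirichlet]; ring

end Generator

section ProductChain

variable {n : ℕ} {Q : Matrix (Fin n) (Fin n) ℝ}

lemma prodGen_mulVec (f : Fin n × Fin n → ℝ) (x y : Fin n) :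
    (prodGen Q *ᵥ f) (x, y) = (Q *ᵥ fun a => f (a, y)) x + (Q *ᵥ fun b => f (x, b)) y := by
  simp only [mulVec, dotProduct, prodGen, add_mul, sum_add_distrib, Fintype.sum_prod_type,
    ite_mul, zero_mul, sum_ite_eq, mem_univ, if_true]
  rw [sum_comm]
  simp only [sum_ite_eq, mem_univ, if_true]

lemma vecMul_prodGen (pi : Fin n → ℝ) (u v : Fin n) :
    ((fun p : Fin n × Fin n => pi p.1 * pi p.2) ᵥ* prodGen Q) (u, v) =
      pi v * (pi ᵥ* Q) u + pi u * (pi ᵥ* Q) v := by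
  simp only [vecMul, dotProduct, prodGen, mul_add, sum_add_distrib, Fintype.sum_prod_type,
    mul_ite, mul_zero, sum_ite_eq', mem_univ, if_true, mul_sum]
  rw [sum_comm]
  simp only [sum_ite_eq', mem_univ, if_true]
  congr 1 <;> exact sum_congr rfl fun _ _ => by ring

lemma prodGen_nonneg_of_ne (hoff : ∀ i j, i ≠ j → 0 ≤ Q i j) (p r : Fin n × Fin n) (hpr : p ≠ r) :
    0 ≤ prodGen Q p r := by
  unfold prodGen
  refine add_nonneg ?_ ?_ <;> split_ifs with h
  · exact hoff _ _ fun h1 => hpr (Prod.ext h1 h)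
  · exact le_rfl
  · exact hoff _ _ fun h2 => hpr (Prod.ext h h2)
  · exact le_rfl

lemma sum_prodGen_eq_zero (hrow : ∀ i, ∑ j, Q i j = 0) (p : Fin n × Fin n) :
    ∑ r, prodGen Q p r = 0 := by
  have h := prodGen_mulVec (Q := Q) (fun _ => 1) p.1 p.2
  simp only [mulVec, dotProduct, mul_one] at h
  rw [h, hrow, hrow, add_zero]

lemma prodGen_diag (z : Fin n) :
    prodGen Q (z, z) (z, z) = 2 * Q z z := by
  simp only [prodGen, if_true]; ring

end ProductChain

theorem stationary_meeting_lower_bound_general {n : ℕ}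
    (Q : Matrix (Fin n) (Fin n) ℝ) (pi : Fin n → ℝ)
    (hQ : IsGenerator Q) (hpi : IsStationaryDist Q pi)
    (hirr : Irreducible Q)
    (m : Fin n × Fin n → ℝ) (hm : IsMeetTimeFn Q m) :
    (1 - ∑ i, pi i ^ 2) ^ 2 / (4 * ∑ i, -Q i i * pi i ^ 2) ≤
      ∑ i, ∑ j, pi i * pi j * m (i, j) := by
  obtain ⟨hoff, hrow⟩ := hQ
  obtain ⟨hpos, hsum, hstat⟩ := hpi
  obtain ⟨hm_nonneg, hm_diag, hm_off, -⟩ := hm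
  set μ : Fin n × Fin n → ℝ := fun p => pi p.1 * pi p.2
  have hμstat : μ ᵥ* prodGen Q = 0 := funext fun p => by
    rw [vecMul_prodGen, show pi ᵥ* Q = 0 from funext hstat]
    simp
  have hbound := sq_sum_compl_le_of_hitting (prodGen_nonneg_of_ne hoff)
    (sum_prodGen_eq_zero hrow) (fun p => (mul_pos (hpos p.1) (hpos p.2)).le) hμstat univ.diag
    (fun p hp => hm_diag p ⟨hirr _ _, (mem_diag.1 hp).2⟩)
    (fun p hp => hm_off p (hirr _ _) fun h => hp (mem_diag.2 ⟨mem_univ _, h⟩))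
  have hcompl_diag : ∑ p ∈ univ.diagᶜ, μ p = 1 - ∑ i, pi i ^ 2 := by
    have htotal : ∑ p, μ p = 1 := by
      rw [Fintype.sum_prod_type, ← hsum, ← sum_mul_sum]
      simp [hsum]
    linarith [sum_add_sum_compl univ.diag μ, sum_diag univ μ,
      sum_congr rfl fun i (_ : i ∈ univ) => (sq (pi i)).symm]
  have hexit : ∑ p ∈ univ.diag, μ p * -prodGen Q p p = 2 * ∑ i, -Q i i * pi i ^ 2 := by
    rw [sum_diag, mul_sum]
    exact sum_congr rfl fun i _ => by simp only [μ, prodGen_diag]; ring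
  rw [hcompl_diag, hexit] at hbound
  simp only [Fintype.sum_prod_type] at hbound
  refine div_le_of_le_mul₀ ?_ (sum_nonneg fun i _ => sum_nonneg fun j _ => ?_) (by linarith)
  · exact mul_nonneg zero_le_four (sum_nonneg fun i _ =>
      mul_nonneg (neg_diag_nonneg_of_generator hoff hrow i) (sq_nonneg _))
  · exact mul_nonneg (mul_pos (hpos i) (hpos j)).le (hm_nonneg (i, j) (hirr i j))

/-- **Proposition (a).** For a reversible irreducible chain with exit rates
`q(i) = -Q(i,i)`, the meeting time from stationarity satisfies
`t_meet^π ≥ (1 - ∑ π(i)²)² / (4 ∑ q(i) π(i)²)`. -/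
theorem stationary_meeting_lower_bound {n : ℕ} (hn : 0 < n)
    (Q : Matrix (Fin n) (Fin n) ℝ) (pi : Fin n → ℝ)
    (hQ : IsGenerator Q) (hrev : Reversible Q pi) (hpi : IsStationaryDist Q pi)
    (hirr : Irreducible Q)
    (m : Fin n × Fin n → ℝ) (hm : IsMeetTimeFn Q m) :
    (1 - ∑ i, pi i ^ 2) ^ 2 / (4 * ∑ i, -Q i i * pi i ^ 2) ≤
      ∑ i, ∑ j, pi i * pi j * m (i, j) :=
  stationary_meeting_lower_bound_general Q pi hQ hpi hirr m hm

end VoterIRG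
end
end

section
/- There exists an absolute constant c_cond > 0 such that for every reversible irreducible continuous-time Markov chain on [n] with stationary distribution π and conductances c(xy) = π(x)Q(x,y), the worst-case expected meeting time of two independent copies satisfies t_meet ≥ c_cond · max_{A ⊂ [n]} π(A)π(A^c) / (∑_{x∈A} ∑_{y∈A^c} c(xy)). -/
open scoped BigOperators Classical
open MeasureTheory Filter

noncomputable section

namespace VoterIRG

/-!
One can take `c_cond = 1`. For a cut `A`, let `F = A × Aᶜ` in the product chain, whose
generator `L` is reversible with respect to `π ⊗ π`. The meeting time `m` satisfies
`∑ₜ L(p,t) (m p - m t) = 1` on `F`, and summing this against `π ⊗ π` over `F` gives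
`π(A) π(Aᶜ)`. By reversibility the transitions inside `F` cancel, and each transition
leaving `F` contributes at most `L(p,t) · t_meet`; the total `π ⊗ π`-flow out of `F` is
`(π(A) + π(Aᶜ)) · c(A, Aᶜ) = c(A, Aᶜ)`.
-/

open Finset

section Generator

variable {S : Type*} [Fintype S] [DecidableEq S]

def cutFlow (μ : S → ℝ) (L : Matrix S S ℝ) (F : Finset S) : ℝ :=
  ∑ p ∈ F, ∑ t ∈ Fᶜ, μ p * L p t

variable {L : Matrix S S ℝ} {μ : S → ℝ}

theorem cutFlow_nonneg (hoff : ∀ p t, p ≠ t → 0 ≤ L p t) (hμ : ∀ p, 0 ≤ μ p) (F : Finset S) :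
    0 ≤ cutFlow μ L F :=
  sum_nonneg fun p hp => sum_nonneg fun t ht =>
    mul_nonneg (hμ p) (hoff p t (ne_of_mem_of_not_mem hp (mem_compl.1 ht)))

theorem sum_mul_sum_sub_eq_sum_compl (hrev : ∀ p t, μ p * L p t = μ t * L t p)
    (F : Finset S) (f : S → ℝ) :
    ∑ p ∈ F, μ p * ∑ t, L p t * (f p - f t) =
      ∑ p ∈ F, ∑ t ∈ Fᶜ, μ p * L p t * (f p - f t) := by
  have hinside : ∑ p ∈ F, ∑ t ∈ F, μ p * L p t * (f p - f t) = 0 := by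
    have hanti : ∑ p ∈ F, ∑ t ∈ F, μ p * L p t * (f p - f t) =
        -∑ p ∈ F, ∑ t ∈ F, μ p * L p t * (f p - f t) := by
      conv_lhs => rw [sum_comm]
      simp only [← sum_neg_distrib]
      refine sum_congr rfl fun p _ => sum_congr rfl fun t _ => ?_
      rw [hrev t p]
      ring
    linarith
  calc ∑ p ∈ F, μ p * ∑ t, L p t * (f p - f t)
      = ∑ p ∈ F, (∑ t ∈ F, μ p * L p t * (f p - f t) +
          ∑ t ∈ Fᶜ, μ p * L p t * (f p - f t)) := by
        refine sum_congr rfl fun p _ => ?_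
        rw [sum_add_sum_compl, mul_sum]
        simp only [mul_assoc]
    _ = ∑ p ∈ F, ∑ t ∈ Fᶜ, μ p * L p t * (f p - f t) := by
        rw [sum_add_distrib, hinside, zero_add]

theorem sum_le_mul_cutFlow_of_mulVec_eq_neg_one (hoff : ∀ p t, p ≠ t → 0 ≤ L p t)
    (hrow : ∀ p, ∑ t, L p t = 0) (hrev : ∀ p t, μ p * L p t = μ t * L t p)
    (hμ : ∀ p, 0 ≤ μ p) {F : Finset S} {f : S → ℝ} {M : ℝ}
    (hf : ∀ p ∈ F, L.mulVec f p = -1) (hf0 : ∀ t, 0 ≤ f t) (hfM : ∀ p, f p ≤ M) :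
    ∑ p ∈ F, μ p ≤ M * cutFlow μ L F := by
  have hdrift : ∀ p ∈ F, ∑ t, L p t * (f p - f t) = 1 := fun p hp => by
    have := hf p hp
    simp only [Matrix.mulVec, dotProduct] at this
    simp only [mul_sub, sum_sub_distrib, ← sum_mul, hrow, this]
    ring
  calc ∑ p ∈ F, μ p = ∑ p ∈ F, μ p * ∑ t, L p t * (f p - f t) :=
        sum_congr rfl fun p hp => by rw [hdrift p hp, mul_one]
    _ = ∑ p ∈ F, ∑ t ∈ Fᶜ, μ p * L p t * (f p - f t) := sum_mul_sum_sub_eq_sum_compl hrev F f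
    _ ≤ ∑ p ∈ F, ∑ t ∈ Fᶜ, μ p * L p t * M := by
        gcongr with p hp t ht
        · exact mul_nonneg (hμ p) (hoff p t (ne_of_mem_of_not_mem hp (mem_compl.1 ht)))
        · linarith [hf0 t, hfM p]
    _ = M * cutFlow μ L F := by
        simp only [cutFlow, ← sum_mul]
        ring

end Generator

section ProductChain

variable {n : ℕ} {Q : Matrix (Fin n) (Fin n) ℝ} {pi : Fin n → ℝ}

theorem prodGen_nonneg (hQ : IsGenerator Q) {p t : Fin n × Fin n} (h : p ≠ t) :
    0 ≤ prodGen Q p t := by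
  unfold prodGen
  apply add_nonneg <;> split_ifs with h' <;> try exact le_rfl
  · exact hQ.1 _ _ fun h₁ => h (Prod.ext h₁ h')
  · exact hQ.1 _ _ fun h₂ => h (Prod.ext h' h₂)

theorem sum_prodGen (hQ : IsGenerator Q) (p : Fin n × Fin n) : ∑ t, prodGen Q p t = 0 := by
  simp [prodGen, Fintype.sum_prod_type, sum_add_distrib, hQ.2]

theorem Reversible.prodGen (hrev : Reversible Q pi) (p t : Fin n × Fin n) :
    pi p.1 * pi p.2 * prodGen Q p t = pi t.1 * pi t.2 * prodGen Q t p := by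
  obtain ⟨x, y⟩ := p
  obtain ⟨a, b⟩ := t
  simp only [VoterIRG.prodGen]
  by_cases hx : x = a <;> by_cases hy : y = b
  · subst hx hy; rfl
  · subst hx
    simp only [hy, Ne.symm hy, if_true, if_false]
    linear_combination pi x * hrev y b
  · subst hy
    simp only [hx, Ne.symm hx, if_true, if_false]
    linear_combination pi y * hrev x a
  · simp [hx, hy, Ne.symm hx, Ne.symm hy]

theorem Reversible.cutFlow_compl (hrev : Reversible Q pi) (A : Finset (Fin n)) :
    cutFlow pi Q Aᶜ = cutFlow pi Q A := by
  rw [cutFlow, cutFlow, compl_compl, sum_comm]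
  exact sum_congr rfl fun x _ => sum_congr rfl fun y _ => hrev y x

theorem sum_compl_prodGen (A : Finset (Fin n)) {x y : Fin n} (hx : x ∈ A) (hy : y ∉ A) :
    ∑ t ∈ (A ×ˢ Aᶜ)ᶜ, prodGen Q (x, y) t = ∑ a ∈ Aᶜ, Q x a + ∑ b ∈ A, Q y b := by
  simp only [prodGen, sum_add_distrib, ← sum_filter]
  congr 1
  · exact sum_nbij' Prod.fst (·, y) (by aesop) (by aesop) (by simp) (by simp) (by simp)
  · exact sum_nbij' Prod.snd (x, ·) (by aesop) (by aesop) (by simp) (by simp) (by simp)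

theorem cutFlow_prodGen (hrev : Reversible Q pi) (A : Finset (Fin n)) :
    cutFlow (fun p => pi p.1 * pi p.2) (prodGen Q) (A ×ˢ Aᶜ) =
      (∑ x ∈ A, pi x + ∑ x ∈ Aᶜ, pi x) * cutFlow pi Q A := by
  calc cutFlow (fun p => pi p.1 * pi p.2) (prodGen Q) (A ×ˢ Aᶜ)
      = ∑ x ∈ A, ∑ y ∈ Aᶜ, (pi y * ∑ a ∈ Aᶜ, pi x * Q x a + pi x * ∑ b ∈ A, pi y * Q y b) := by
        rw [cutFlow, sum_product]
        refine sum_congr rfl fun x hx => sum_congr rfl fun y hy => ?_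
        simp only [← mul_sum, sum_compl_prodGen A hx (mem_compl.1 hy)]
        ring
    _ = (∑ y ∈ Aᶜ, pi y) * cutFlow pi Q A + (∑ x ∈ A, pi x) * cutFlow pi Q Aᶜ := by
        simp only [cutFlow, compl_compl, sum_add_distrib, ← mul_sum, ← sum_mul]
    _ = (∑ x ∈ A, pi x + ∑ x ∈ Aᶜ, pi x) * cutFlow pi Q A := by
        rw [hrev.cutFlow_compl]
        ring

theorem mul_sum_compl_le_mul_cutFlow (hQ : IsGenerator Q) (hrev : Reversible Q pi)
    (hpi : ∀ i, 0 ≤ pi i) (hsum : ∑ i, pi i = 1) {m : Fin n × Fin n → ℝ} {M : ℝ}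
    (hm : ∀ p : Fin n × Fin n, p.1 ≠ p.2 → (prodGen Q).mulVec m p = -1)
    (hm0 : ∀ p, 0 ≤ m p) (hmM : ∀ p, m p ≤ M) (A : Finset (Fin n)) :
    (∑ x ∈ A, pi x) * ∑ x ∈ Aᶜ, pi x ≤ M * cutFlow pi Q A := by
  have hcut := sum_le_mul_cutFlow_of_mulVec_eq_neg_one (F := A ×ˢ Aᶜ)
    (fun _ _ => prodGen_nonneg hQ) (sum_prodGen hQ) hrev.prodGen
    (fun p => mul_nonneg (hpi p.1) (hpi p.2))
    (fun p hp => hm p fun h => (mem_compl.1 (mem_product.1 hp).2) (h ▸ (mem_product.1 hp).1))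
    hm0 hmM
  rwa [sum_product, ← sum_mul_sum, cutFlow_prodGen hrev, sum_add_sum_compl, hsum, one_mul]
    at hcut

end ProductChain

/-- **Proposition (b).** There is an absolute constant `c_cond > 0` such that for every
reversible irreducible chain,
`t_meet ≥ c_cond · max_{A ⊆ [n]} π(A) π(Aᶜ) / (∑_{x∈A} ∑_{y∈Aᶜ} c(xy))`. -/
theorem conductance_meeting_lower_bound :
    ∃ ccond : ℝ, 0 < ccond ∧
      ∀ (n : ℕ) (Q : Matrix (Fin n) (Fin n) ℝ) (pi : Fin n → ℝ),
        IsGenerator Q → Reversible Q pi → IsStationaryDist Q pi → Irreducible Q →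
        ∀ m : Fin n × Fin n → ℝ, IsMeetTimeFn Q m →
          ccond * (⨆ A : Finset (Fin n),
            ((∑ x ∈ A, pi x) * ∑ x ∈ Aᶜ, pi x) / ∑ x ∈ A, ∑ y ∈ Aᶜ, pi x * Q x y) ≤
          ⨆ p : Fin n × Fin n, m p := by
  refine ⟨1, one_pos, fun n Q pi hQ hrev hstat hirr m hm => ?_⟩
  have hm0 : ∀ p, 0 ≤ m p := fun p => hm.1 p (hirr p.1 p.2)
  have hmM : ∀ p, m p ≤ ⨆ p, m p := le_ciSup (Finite.bddAbove_range m)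
  have hpi : ∀ i, 0 ≤ pi i := fun i => (hstat.1 i).le
  rw [one_mul]
  refine ciSup_le fun A => div_le_of_le_mul₀ (cutFlow_nonneg hQ.1 hpi A) (Real.iSup_nonneg hm0) ?_
  exact mul_sum_compl_le_mul_cutFlow hQ hrev hpi hstat.2.1
    (fun p hp => hm.2.2.1 p (hirr p.1 p.2) hp) hm0 hmM A

end VoterIRG
end
end

section
/- For a reversible irreducible continuous-time Markov chain on [n] with stationary distribution π, for every state i the mixing time from i satisfies t_mix(i) ≤ 2 E_π(T_i), where E_π(T_i) is the expected hitting time of i from a π-distributed start. -/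
open scoped BigOperators Classical
open MeasureTheory Filter

noncomputable section

/-!
Conjugating by `D = diag √π` turns `Q` into a matrix `M = D Q D⁻¹` that is symmetric by
reversibility and negative semidefinite, its quadratic form being minus the Dirichlet form.
Stationarity forces `(Q g)(i) = 1/π(i) - 1` for `g = 𝔼_·(T_i)`, so `w = √π g` solves
`M w = v := 𝟙_i/√π(i) - √π`, and `-⟪v, w⟫ = 𝔼_π(T_i)`. Since
`P_t(i, j) - π(j) = √π(j) (e^{tM} v)(j)`, Cauchy–Schwarz bounds the squared `ℓ¹` distance by
`‖e^{tM} M w‖²`; in an eigenbasis of `-M` with eigenvalues `λ ≥ 0` this is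
`∑ λ² e^{-2tλ} c² ≤ (2t)⁻¹ ∑ λ c² = 𝔼_π(T_i) / (2t)`, as `x e^{-x} ≤ 1`.
Taking `t = 2 𝔼_π(T_i)` gives distance at most `1/2`.
-/

namespace Real

theorem two_mul_sq_exp_neg_mul_mul_le {t l : ℝ} (hl : 0 ≤ l) (c : ℝ) :
    2 * t * (exp (-t * l) * (l * c)) ^ 2 ≤ l * c ^ 2 := by
  have hx : 2 * t * l ≤ exp (2 * t * l) := by linarith [add_one_le_exp (2 * t * l)]
  have he : exp (-t * l) ^ 2 * exp (2 * t * l) = 1 := by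
    rw [sq, ← exp_add, ← exp_add, ← exp_zero]; ring_nf
  calc 2 * t * (exp (-t * l) * (l * c)) ^ 2
      = l * c ^ 2 * (2 * t * l * exp (-t * l) ^ 2) := by ring
    _ ≤ l * c ^ 2 * (exp (2 * t * l) * exp (-t * l) ^ 2) := by gcongr
    _ = l * c ^ 2 := by rw [mul_comm (exp _), he, mul_one]

end Real

namespace Matrix

variable {ι : Type*} [Fintype ι] [DecidableEq ι] {U : Matrix ι ι ℝ}

theorem dotProduct_mulVec_mulVec_of_transpose_mul_self (hU : Uᵀ * U = 1) (x y : ι → ℝ) :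
    U *ᵥ x ⬝ᵥ U *ᵥ y = x ⬝ᵥ y := by
  rw [dotProduct_mulVec, ← mulVec_transpose, mulVec_mulVec, hU, one_mulVec]

theorem mul_diagonal_mul_transpose_mulVec (d x : ι → ℝ) :
    (U * diagonal d * Uᵀ) *ᵥ x = U *ᵥ fun k => d k * (Uᵀ *ᵥ x) k := by
  rw [← mulVec_mulVec, ← mulVec_mulVec]
  congr 1
  ext k
  exact mulVec_diagonal d _ k

theorem exp_smul_mul_diagonal_mul_transpose (hU : Uᵀ * U = 1) (μ : ι → ℝ) (t : ℝ) :
    NormedSpace.exp (t • (U * diagonal μ * Uᵀ)) =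
      U * diagonal (fun k => Real.exp (t * μ k)) * Uᵀ := by
  have hinv : U⁻¹ = Uᵀ := inv_eq_left_inv hU
  have hunit : IsUnit U := (isUnit_iff_isUnit_det U).mpr (isUnit_det_of_left_inverse hU)
  rw [← hinv, ← smul_mul, ← Matrix.mul_smul, ← diagonal_smul, exp_conj _ _ hunit,
    exp_diagonal, Pi.exp_def, Real.exp_eq_exp_ℝ]
  rfl

theorem IsHermitian.exists_eq_mul_diagonal_mul_transpose {A : Matrix ι ι ℝ} (hA : A.IsHermitian) :
    ∃ U : Matrix ι ι ℝ, Uᵀ * U = 1 ∧ A = U * diagonal hA.eigenvalues * Uᵀ := by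
  refine ⟨hA.eigenvectorUnitary, ?_, ?_⟩
  · simpa [star_eq_conjTranspose] using Unitary.coe_star_mul_self hA.eigenvectorUnitary
  · conv_lhs => rw [hA.spectral_theorem]
    simp [Unitary.conjStarAlgAut_apply, star_eq_conjTranspose]

theorem IsHermitian.exp_smul_mulVec_of_mulVec_eq_zero {A : Matrix ι ι ℝ} (hA : A.IsHermitian)
    {x : ι → ℝ} (hx : A *ᵥ x = 0) (t : ℝ) : NormedSpace.exp (t • A) *ᵥ x = x := by
  obtain ⟨U, hU, hAU⟩ := hA.exists_eq_mul_diagonal_mul_transpose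
  -- without `set`, rewriting with `hAU` would also rewrite the `A` hidden in `hA.eigenvalues`
  set μ := hA.eigenvalues
  have hc : ∀ k, μ k * (Uᵀ *ᵥ x) k = 0 := by
    intro k
    have := congrArg (Uᵀ *ᵥ ·) hx
    simp only [hAU, mul_diagonal_mul_transpose_mulVec, mulVec_mulVec, hU, one_mulVec,
      mulVec_zero] at this
    simpa using congrFun this k
  rw [hAU, exp_smul_mul_diagonal_mul_transpose hU, mul_diagonal_mul_transpose_mulVec]
  conv_rhs => rw [← one_mulVec x, ← mul_eq_one_comm.mp hU, ← mulVec_mulVec]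
  congr 1
  ext k
  rcases mul_eq_zero.mp (hc k) with h | h <;> simp [h]

theorem PosSemidef.two_mul_dotProduct_exp_neg_smul_mulVec_le {A : Matrix ι ι ℝ}
    (hA : A.PosSemidef) (t : ℝ) (w : ι → ℝ) :
    2 * t * (NormedSpace.exp ((-t) • A) *ᵥ A *ᵥ w ⬝ᵥ NormedSpace.exp ((-t) • A) *ᵥ A *ᵥ w) ≤
      A *ᵥ w ⬝ᵥ w := by
  obtain ⟨U, hU, hAU⟩ := hA.isHermitian.exists_eq_mul_diagonal_mul_transpose
  set μ := hA.isHermitian.eigenvalues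
  set c := Uᵀ *ᵥ w
  have hw : w = U *ᵥ c := by rw [mulVec_mulVec, mul_eq_one_comm.mp hU, one_mulVec]
  have hAw : A *ᵥ w = U *ᵥ fun k => μ k * c k := by rw [hAU, mul_diagonal_mul_transpose_mulVec]
  have hexp : NormedSpace.exp ((-t) • A) *ᵥ A *ᵥ w =
      U *ᵥ fun k => Real.exp (-t * μ k) * (μ k * c k) := by
    rw [hAw, hAU, exp_smul_mul_diagonal_mul_transpose hU, mul_diagonal_mul_transpose_mulVec,
      mulVec_mulVec, hU, one_mulVec]
  rw [hexp, hAw, hw, dotProduct_mulVec_mulVec_of_transpose_mul_self hU,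
    dotProduct_mulVec_mulVec_of_transpose_mul_self hU]
  simp only [dotProduct, Finset.mul_sum]
  refine Finset.sum_le_sum fun k _ => ?_
  have := Real.two_mul_sq_exp_neg_mul_mul_le (t := t) (hA.eigenvalues_nonneg k) (c k)
  nlinarith

end Matrix

namespace VoterIRG

open Matrix

section

variable {n : ℕ} {Q : Matrix (Fin n) (Fin n) ℝ} {pi : Fin n → ℝ}

theorem IsGenerator.dotProduct_mulVec_nonpos (hQ : IsGenerator Q) (hpi : ∀ a, 0 ≤ pi a)
    (hstat : ∀ b, ∑ a, pi a * Q a b = 0) (f : Fin n → ℝ) : (pi * f) ⬝ᵥ (Q *ᵥ f) ≤ 0 := by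
  have hsq : 0 ≤ ∑ a, ∑ b, pi a * Q a b * (f a - f b) ^ 2 := by
    refine Finset.sum_nonneg fun a _ => Finset.sum_nonneg fun b _ => ?_
    rcases eq_or_ne a b with rfl | hab
    · simp
    · exact mul_nonneg (mul_nonneg (hpi a) (hQ.1 a b hab)) (sq_nonneg _)
  have hrow : ∑ a, ∑ b, pi a * Q a b * f a ^ 2 = 0 := Finset.sum_eq_zero fun a _ => by
    rw [← Finset.sum_mul, ← Finset.mul_sum, hQ.2 a, mul_zero, zero_mul]
  have hcol : ∑ a, ∑ b, pi a * Q a b * f b ^ 2 = 0 := by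
    rw [Finset.sum_comm]
    simp_rw [← Finset.sum_mul, hstat, zero_mul, Finset.sum_const_zero]
  have hexpand : ∑ a, ∑ b, pi a * Q a b * (f a - f b) ^ 2 =
      ∑ a, ∑ b, pi a * Q a b * f a ^ 2 - 2 * ((pi * f) ⬝ᵥ (Q *ᵥ f)) +
        ∑ a, ∑ b, pi a * Q a b * f b ^ 2 := by
    simp only [dotProduct, mulVec, Pi.mul_apply, Finset.mul_sum, ← Finset.sum_sub_distrib,
      ← Finset.sum_add_distrib]
    exact Finset.sum_congr rfl fun a _ => Finset.sum_congr rfl fun b _ => by ring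
  linarith

def symmetrizedGen (Q : Matrix (Fin n) (Fin n) ℝ) (pi : Fin n → ℝ) : Matrix (Fin n) (Fin n) ℝ :=
  diagonal (fun x => √(pi x)) * Q * diagonal (fun x => (√(pi x))⁻¹)

theorem symmetrizedGen_apply (a b : Fin n) :
    symmetrizedGen Q pi a b = √(pi a) * Q a b * (√(pi b))⁻¹ := by
  simp [symmetrizedGen, mul_diagonal, diagonal_mul]

theorem symmetrizedGen_mulVec (hpi : ∀ x, 0 < pi x) (f : Fin n → ℝ) :
    symmetrizedGen Q pi *ᵥ (fun x => √(pi x) * f x) = fun x => √(pi x) * (Q *ᵥ f) x := by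
  ext a
  simp only [mulVec, dotProduct, symmetrizedGen_apply, Finset.mul_sum]
  refine Finset.sum_congr rfl fun b _ => ?_
  field_simp [(Real.sqrt_pos.2 (hpi b)).ne']

theorem isHermitian_symmetrizedGen (hrev : Reversible Q pi) (hpi : ∀ x, 0 < pi x) :
    (symmetrizedGen Q pi).IsHermitian := by
  ext a b
  have ha := Real.sqrt_pos.2 (hpi a)
  have hb := Real.sqrt_pos.2 (hpi b)
  simp only [conjTranspose_apply, star_trivial, symmetrizedGen_apply]
  field_simp
  have hba := hrev b a
  rw [← Real.sq_sqrt (hpi a).le, ← Real.sq_sqrt (hpi b).le] at hba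
  linear_combination hba

theorem posSemidef_neg_symmetrizedGen (hQ : IsGenerator Q) (hrev : Reversible Q pi)
    (hpi : ∀ x, 0 < pi x) : (-symmetrizedGen Q pi).PosSemidef := by
  refine .of_dotProduct_mulVec_nonneg (isHermitian_symmetrizedGen hrev hpi).neg fun x => ?_
  have hstat : ∀ b, ∑ a, pi a * Q a b = 0 := fun b => by
    simp_rw [fun a => hrev a b, ← Finset.mul_sum, hQ.2 b, mul_zero]
  set f : Fin n → ℝ := fun y => x y / √(pi y)
  have hx : x = fun y => √(pi y) * f y := by
    ext y
    simp only [f]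
    field_simp [(Real.sqrt_pos.2 (hpi y)).ne']
  have hform : (fun y => √(pi y) * f y) ⬝ᵥ (fun y => √(pi y) * (Q *ᵥ f) y) =
      (pi * f) ⬝ᵥ (Q *ᵥ f) := by
    simp only [dotProduct, Pi.mul_apply]
    refine Finset.sum_congr rfl fun y _ => ?_
    linear_combination (f y * (Q *ᵥ f) y) * Real.sq_sqrt (hpi y).le
  rw [star_trivial, hx, neg_mulVec, symmetrizedGen_mulVec hpi, dotProduct_neg, hform, neg_nonneg]
  exact hQ.dotProduct_mulVec_nonpos (fun a => (hpi a).le) hstat f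

theorem transSemigroup_eq_conj_symmetrizedGen (hpi : ∀ x, 0 < pi x) (t : ℝ) :
    transSemigroup Q t = diagonal (fun x => (√(pi x))⁻¹) *
      NormedSpace.exp (t • symmetrizedGen Q pi) * diagonal (fun x => √(pi x)) := by
  have hinv : (diagonal fun x => √(pi x))⁻¹ = diagonal fun x => (√(pi x))⁻¹ := by
    refine inv_eq_left_inv ?_
    rw [diagonal_mul_diagonal, ← diagonal_one]
    exact congrArg diagonal (funext fun x => inv_mul_cancel₀ (Real.sqrt_pos.2 (hpi x)).ne')
  have hunit : IsUnit (diagonal fun x => √(pi x)) :=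
    (isUnit_diagonal).2 (Pi.isUnit_iff.2 fun x => (Real.sqrt_pos.2 (hpi x)).ne'.isUnit)
  have hdet := (isUnit_iff_isUnit_det _).1 hunit
  have hconj : t • Q = (diagonal fun x => √(pi x))⁻¹ * (t • symmetrizedGen Q pi) *
      diagonal fun x => √(pi x) := by
    rw [symmetrizedGen, ← hinv, Matrix.mul_smul, Matrix.smul_mul, ← Matrix.mul_assoc,
      ← Matrix.mul_assoc, nonsing_inv_mul _ hdet, Matrix.one_mul, Matrix.mul_assoc,
      nonsing_inv_mul _ hdet, Matrix.mul_one]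
  rw [transSemigroup, hconj, exp_conj' _ _ hunit, hinv]

theorem transSemigroup_apply_sub_eq (hQ : IsGenerator Q) (hrev : Reversible Q pi)
    (hpi : ∀ x, 0 < pi x) (t : ℝ) (i j : Fin n) :
    transSemigroup Q t i j - pi j = √(pi j) * (NormedSpace.exp (t • symmetrizedGen Q pi) *ᵥ
      (Pi.single i (√(pi i))⁻¹ - fun x => √(pi x))) j := by
  have hM := isHermitian_symmetrizedGen hrev hpi
  have hker : symmetrizedGen Q pi *ᵥ (fun x => √(pi x)) = 0 := by
    have := symmetrizedGen_mulVec (Q := Q) hpi fun _ => 1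
    simp only [mul_one] at this
    rw [this]
    ext x
    simp [mulVec, dotProduct, hQ.2 x]
  have hsymm : NormedSpace.exp (t • symmetrizedGen Q pi) j i =
      NormedSpace.exp (t • symmetrizedGen Q pi) i j := by
    rw [← transpose_apply (NormedSpace.exp _), ← exp_transpose, transpose_smul,
      ← conjTranspose_eq_transpose_of_trivial, hM.eq]
  rw [mulVec_sub, hM.exp_smul_mulVec_of_mulVec_eq_zero hker,
    transSemigroup_eq_conj_symmetrizedGen hpi]
  simp only [mul_diagonal, diagonal_mul, Pi.sub_apply, mulVec_single, Pi.smul_apply, col_apply,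
    MulOpposite.smul_eq_mul_unop, MulOpposite.unop_op, hsymm]
  linear_combination Real.sq_sqrt (hpi j).le

theorem IsStationaryDist.mulVec_eq_single_sub_one (hpi : IsStationaryDist Q pi)
    {g : Fin n → ℝ} {i : Fin n} (hg : ∀ x, x ≠ i → (Q *ᵥ g) x = -1) :
    Q *ᵥ g = Pi.single i (pi i)⁻¹ - 1 := by
  obtain ⟨hpos, hsum, hstat⟩ := hpi
  have hzero : pi ⬝ᵥ Q *ᵥ g = 0 := by
    rw [dotProduct_mulVec, show pi ᵥ* Q = 0 from funext hstat, zero_dotProduct]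
  have hi : pi i * (Q *ᵥ g) i = 1 - pi i := by
    rw [dotProduct, ← Finset.add_sum_erase _ _ (Finset.mem_univ i)] at hzero
    rw [← Finset.add_sum_erase _ _ (Finset.mem_univ i)] at hsum
    have hrest : ∑ x ∈ Finset.univ.erase i, pi x * (Q *ᵥ g) x =
        -∑ x ∈ Finset.univ.erase i, pi x := by
      rw [← Finset.sum_neg_distrib]
      exact Finset.sum_congr rfl fun x hx => by rw [hg x (Finset.ne_of_mem_erase hx), mul_neg_one]
    linarith
  ext x
  rcases eq_or_ne x i with rfl | hx
  · simp only [Pi.sub_apply, Pi.single_eq_same, Pi.one_apply]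
    field_simp [(hpos x).ne']
    linarith
  · simp [hg x hx, hx]

theorem two_mul_sq_sum_abs_transSemigroup_sub_le (hQ : IsGenerator Q) (hrev : Reversible Q pi)
    (hpi : IsStationaryDist Q pi) {g : Fin n → ℝ} {i : Fin n} (hgi : g i = 0)
    (hg : ∀ x, x ≠ i → (Q *ᵥ g) x = -1) {t : ℝ} (ht : 0 ≤ t) :
    2 * t * (∑ j, |transSemigroup Q t i j - pi j|) ^ 2 ≤ ∑ x, pi x * g x := by
  have hpos := hpi.1
  set s : Fin n → ℝ := fun x => √(pi x)
  set v : Fin n → ℝ := Pi.single i (s i)⁻¹ - s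
  set w : Fin n → ℝ := fun x => s x * g x
  set y := NormedSpace.exp (t • symmetrizedGen Q pi) *ᵥ v
  have hMw : symmetrizedGen Q pi *ᵥ w = v := by
    rw [symmetrizedGen_mulVec hpos, hpi.mulVec_eq_single_sub_one hg]
    ext x
    rcases eq_or_ne x i with rfl | hx
    · simp only [v, s, Pi.sub_apply, Pi.single_eq_same, Pi.one_apply]
      field_simp [(hpos x).ne', (Real.sqrt_pos.2 (hpos x)).ne']
      rw [Real.sq_sqrt (hpos x).le]
    · simp [v, s, hx]
  have hE : -(v ⬝ᵥ w) = ∑ x, pi x * g x := by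
    simp only [v, w, dotProduct, Pi.sub_apply, sub_mul, Finset.sum_sub_distrib, Pi.single_apply,
      ite_mul, zero_mul, Finset.sum_ite_eq', Finset.mem_univ, if_true, hgi, mul_zero, zero_sub,
      neg_neg]
    exact Finset.sum_congr rfl fun x _ => by rw [← mul_assoc, Real.mul_self_sqrt (hpos x).le]
  have hCS : (∑ j, |transSemigroup Q t i j - pi j|) ^ 2 ≤ y ⬝ᵥ y := by
    simp only [transSemigroup_apply_sub_eq hQ hrev hpos, abs_mul,
      abs_of_nonneg (Real.sqrt_nonneg _)]
    calc (∑ j, √(pi j) * |y j|) ^ 2 ≤ (∑ j, √(pi j) ^ 2) * ∑ j, |y j| ^ 2 :=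
          Finset.sum_mul_sq_le_sq_mul_sq _ _ _
      _ = y ⬝ᵥ y := by
          simp only [Real.sq_sqrt (hpos _).le, hpi.2.1, one_mul, sq_abs, dotProduct]
          exact Finset.sum_congr rfl fun j _ => sq (y j)
  have hspec : 2 * t * (y ⬝ᵥ y) ≤ -(v ⬝ᵥ w) := by
    have := (posSemidef_neg_symmetrizedGen hQ hrev hpos).two_mul_dotProduct_exp_neg_smul_mulVec_le
      t w
    simpa [neg_mulVec, hMw, neg_smul_neg, mulVec_neg] using this
  calc 2 * t * (∑ j, |transSemigroup Q t i j - pi j|) ^ 2 ≤ 2 * t * (y ⬝ᵥ y) := by gcongr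
    _ ≤ ∑ x, pi x * g x := hE ▸ hspec

theorem sInf_le_two_mul_of_two_mul_sq_le {d : ℝ → ℝ} {E : ℝ}
    (h : ∀ t, 0 ≤ t → 2 * t * d t ^ 2 ≤ E) : sInf {t | 0 ≤ t ∧ d t ≤ 1 / 2} ≤ 2 * E := by
  have hE : 0 ≤ E := by simpa using h 0 le_rfl
  refine le_of_forall_gt_imp_ge_of_dense fun t ht => csInf_le ⟨0, fun _ h => h.1⟩ ⟨by linarith, ?_⟩
  have := h t (by linarith)
  by_contra hlt
  have : 1 / 4 < d t ^ 2 := by nlinarith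
  nlinarith

end

theorem mixing_from_le_hitting_general {n : ℕ}
    (Q : Matrix (Fin n) (Fin n) ℝ) (pi : Fin n → ℝ)
    (hQ : IsGenerator Q) (hrev : Reversible Q pi) (hpi : IsStationaryDist Q pi)
    (hirr : Irreducible Q)
    (h : Fin n → Fin n → ℝ) (hh : IsHitTimeFn Q h) (i : Fin n) :
    mixingTimeFrom Q pi i ≤ 2 * ∑ x, pi x * h x i := by
  obtain ⟨-, hzero, hgen, -⟩ := hh i
  exact sInf_le_two_mul_of_two_mul_sq_le fun t ht =>
    two_mul_sq_sum_abs_transSemigroup_sub_le hQ hrev hpi (g := fun x => h x i)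
      (hzero i ⟨hirr i i, rfl⟩) (fun x hx => hgen x (hirr x i) hx) ht

/-- **Lemma.** For a reversible irreducible chain and any state `i`,
`t_mix(i) ≤ 2 𝔼_π(T_i)`. -/
theorem mixing_from_le_hitting {n : ℕ} (hn : 0 < n)
    (Q : Matrix (Fin n) (Fin n) ℝ) (pi : Fin n → ℝ)
    (hQ : IsGenerator Q) (hrev : Reversible Q pi) (hpi : IsStationaryDist Q pi)
    (hirr : Irreducible Q)
    (h : Fin n → Fin n → ℝ) (hh : IsHitTimeFn Q h) (i : Fin n) :
    mixingTimeFrom Q pi i ≤ 2 * ∑ x, pi x * h x i :=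
  mixing_from_le_hitting_general Q pi hQ hrev hpi hirr h hh i

end VoterIRG
end
end
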